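/- Let P be a lattice path starting and ending with a corner (East step followed by North step). For each path P' weakly below P with cc(P') = k ≥ 1 and each common corner c of P' and P, define a path by shifting the subpath of P' Northeast of c one step South (or taking P' itself if c is the Northeast-most corner of P). This assignment is a bijection between the set of pairs (P', common corner of P' and P) and the set of all lattice paths weakly below P. -/

import Mathlib

/-! Lattice paths with unit East and North steps, encoded as `List Bool`
where `false` is an East step and `true` is a North step, read from the
starting (Southwest) point. -/

/-- `heightsAux p k` lists, for each East step of `p`, the number of North
steps preceding it, starting from initial height `k`. -/
def heightsAux : List Bool → ℕ → List ℕ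
  | [], _ => []
  | false :: rest, k => k :: heightsAux rest k
  | true :: rest, k => heightsAux rest (k + 1)

/-- The list of heights at which the successive East steps of `p` occur. -/
def heights (p : List Bool) : List ℕ := heightsAux p 0

/-- Number of East steps. -/
def countE (p : List Bool) : ℕ := p.count false

/-- Number of North steps. -/
def countN (p : List Bool) : ℕ := p.count true

/-- `p` is weakly below `q`: same endpoints, and each East step of `p` occurs
at a height not exceeding that of the corresponding East step of `q`. -/
def WeaklyBelow (p q : List Bool) : Prop :=
  countE p = countE q ∧ countN p = countN q ∧
    List.Forall₂ (· ≤ ·) (heights p) (heights q)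

/-- The path `p` has a corner (an East step immediately followed by a North
step) at its `i`-th East step (0-based). -/
def PathCorner (p : List Bool) (i : ℕ) : Prop :=
  (i + 1 = (heights p).length ∧ (heights p).getD i 0 < countN p) ∨
  (i + 1 < (heights p).length ∧ (heights p).getD i 0 < (heights p).getD (i + 1) 0)

/-- `p` and `q` have a common corner at their `i`-th East step: both have a
corner there and these corners are at the same location in the plane. -/
def CommonCorner (q p : List Bool) (i : ℕ) : Prop :=
  PathCorner p i ∧ PathCorner q i ∧ (heights p).getD i 0 = (heights q).getD i 0

/-- `cc q p` is the number of corners that `p` and `q` have in common. -/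
noncomputable def cc (p q : List Bool) : ℕ :=
  Set.ncard {i : ℕ | CommonCorner q p i}

/-- Remove the first North step of a path. -/
def removeFirstN : List Bool → List Bool
  | [] => []
  | true :: rest => rest
  | false :: rest => false :: removeFirstN rest

/-- Remove the first North step occurring after the `i`-th East step (0-based). -/
def removeNAfterE : List Bool → ℕ → List Bool
  | [], _ => []
  | false :: rest, 0 => false :: removeFirstN rest
  | false :: rest, Nat.succ i => false :: removeNAfterE rest i
  | true :: rest, i => true :: removeNAfterE rest i

/-- Shift the subpath of `p` Northeast of the corner at the `i`-th East step
one step South (keeping endpoints, so a North step is appended at the end);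
if the corner is the Northeast-most corner of `P` (the corner at the last East
step of `P`, since `P` ends with a corner), take `p` itself. -/
def shiftAtCorner (P p : List Bool) (i : ℕ) : List Bool :=
  if i = countE P - 1 then p else removeNAfterE p i ++ [true]

/-! A path is determined by its number of North steps together with the heights of its East
steps, and it is weakly below `P` iff these heights are pointwise at most those of `P`.
Shifting at a common corner `c` lowers by one every East step after `c`. Because the path turns
North at `c`, the image is still weakly below `P`, shares the East step at `c` with `P`, and is
strictly below `P` afterwards; so `c` is recovered as the Northeast-most shared East step.
Conversely, a path weakly below `P` shares its first East step with `P` (as `P` starts with a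
corner); raising everything after its Northeast-most shared East step gives the unique preimage,
and both paths turn North there. That `P` ends with a corner covers the case where that step is
the last one. -/

@[simp] lemma countE_cons_false (p : List Bool) : countE (false :: p) = countE p + 1 := by
  simp [countE]
@[simp] lemma countE_cons_true (p : List Bool) : countE (true :: p) = countE p := by
  simp [countE]
@[simp] lemma countN_cons_false (p : List Bool) : countN (false :: p) = countN p := by
  simp [countN]
@[simp] lemma countN_cons_true (p : List Bool) : countN (true :: p) = countN p + 1 := by
  simp [countN]
@[simp] lemma countN_append_true (p : List Bool) : countN (p ++ [true]) = countN p + 1 := by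
  simp [countN]

lemma length_heightsAux (p : List Bool) (k : ℕ) : (heightsAux p k).length = countE p := by
  induction p generalizing k with
  | nil => rfl
  | cons a p ih => cases a <;> simp [heightsAux, ih]

lemma length_heights (p : List Bool) : (heights p).length = countE p := length_heightsAux p 0

lemma heightsAux_succ (p : List Bool) (k : ℕ) :
    heightsAux p (k + 1) = (heightsAux p k).map (· + 1) := by
  induction p generalizing k with
  | nil => rfl
  | cons a p ih => cases a <;> simp [heightsAux, ih]

lemma le_of_mem_heightsAux {p : List Bool} {k x : ℕ} (hx : x ∈ heightsAux p k) : k ≤ x := by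
  induction p generalizing k with
  | nil => simp [heightsAux] at hx
  | cons a p ih =>
    cases a with
    | false => exact (List.mem_cons.1 hx).elim (·.ge) ih
    | true => exact (Nat.le_succ k).trans (ih hx)

lemma le_add_countN_of_mem_heightsAux {p : List Bool} {k x : ℕ} (hx : x ∈ heightsAux p k) :
    x ≤ k + countN p := by
  induction p generalizing k with
  | nil => simp [heightsAux] at hx
  | cons a p ih =>
    cases a with
    | false => exact (List.mem_cons.1 hx).elim (fun h => by simp [h]) ih
    | true => simpa [Nat.add_assoc, Nat.add_comm 1] using ih (k := k + 1) hx

lemma pairwise_heightsAux (p : List Bool) (k : ℕ) : (heightsAux p k).Pairwise (· ≤ ·) := by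
  induction p generalizing k with
  | nil => exact List.Pairwise.nil
  | cons a p ih =>
    cases a with
    | false => exact List.pairwise_cons.2 ⟨fun _ => le_of_mem_heightsAux, ih k⟩
    | true => exact ih (k + 1)

lemma pairwise_heights (p : List Bool) : (heights p).Pairwise (· ≤ ·) := pairwise_heightsAux p 0

lemma heights_getD_le_countN (p : List Bool) (j : ℕ) : (heights p).getD j 0 ≤ countN p := by
  by_cases hj : j < (heights p).length
  · rw [List.getD_eq_getElem _ _ hj]
    simpa using le_add_countN_of_mem_heightsAux (List.getElem_mem hj)
  · rw [List.getD_eq_default _ _ (not_lt.1 hj)]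
    exact Nat.zero_le _

lemma heights_getD_mono (p : List Bool) {i j : ℕ} (hij : i ≤ j) (hj : j < countE p) :
    (heights p).getD i 0 ≤ (heights p).getD j 0 := by
  rw [← length_heights] at hj
  rw [List.getD_eq_getElem _ _ (hij.trans_lt hj), List.getD_eq_getElem _ _ hj]
  exact (pairwise_heights p).rel_get_of_le (a := ⟨i, hij.trans_lt hj⟩) (b := ⟨j, hj⟩) hij

lemma weaklyBelow_iff {p q : List Bool} :
    WeaklyBelow p q ↔ countE p = countE q ∧ countN p = countN q ∧
      ∀ j < countE p, (heights p).getD j 0 ≤ (heights q).getD j 0 := by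
  unfold WeaklyBelow
  refine and_congr_right fun hE => and_congr_right fun _ => ?_
  have hlen : (heights p).length = (heights q).length := by rw [length_heights, length_heights, hE]
  rw [List.forall₂_iff_get]
  refine ⟨fun ⟨_, h⟩ j hj => ?_, fun h => ⟨hlen, fun j hp hq => ?_⟩⟩
  · have hp : j < (heights p).length := by rwa [length_heights]
    rw [List.getD_eq_getElem _ _ hp, List.getD_eq_getElem _ _ (hlen ▸ hp)]
    exact h j hp (hlen ▸ hp)
  · have := h j (by rwa [← length_heights])
    rwa [List.getD_eq_getElem _ _ hp, List.getD_eq_getElem _ _ hq] at this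

lemma heightsAux_append_true (p : List Bool) (k : ℕ) :
    heightsAux (p ++ [true]) k = heightsAux p k := by
  induction p generalizing k with
  | nil => rfl
  | cons a p ih => cases a <;> simp [heightsAux, ih]

lemma heightsAux_append_false_true (p : List Bool) (k : ℕ) :
    heightsAux (p ++ [false, true]) k = heightsAux p k ++ [k + countN p] := by
  induction p generalizing k with
  | nil => rfl
  | cons a p ih => cases a <;> simp [heightsAux, ih, Nat.add_assoc, Nat.add_comm 1]

lemma pathCorner_iff_of_succ_eq {p : List Bool} {i : ℕ} (hi : i + 1 = countE p) :
    PathCorner p i ↔ (heights p).getD i 0 < countN p := by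
  simp [PathCorner, length_heights, hi]

lemma pathCorner_append_false_true (p : List Bool) :
    PathCorner (p ++ [false, true]) (countE (p ++ [false, true]) - 1) := by
  have hE : countE (p ++ [false, true]) = countE p + 1 := by simp [countE]
  rw [pathCorner_iff_of_succ_eq (by omega), hE, Nat.add_sub_cancel, heights,
    heightsAux_append_false_true, List.getD_eq_getElem _ _ (by simp [length_heightsAux])]
  simp [length_heightsAux, countN]

def ofHeights (N : ℕ) : List ℕ → ℕ → List Bool
  | [], k => List.replicate (N - k) true
  | a :: l, k => List.replicate (a - k) true ++ false :: ofHeights N l a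

lemma heightsAux_replicate_true_append (m : ℕ) (p : List Bool) (k : ℕ) :
    heightsAux (List.replicate m true ++ p) k = heightsAux p (k + m) := by
  induction m generalizing k with
  | zero => rfl
  | succ m ih =>
    rw [List.replicate_succ, List.cons_append, heightsAux, ih]
    congr 1
    omega

lemma heightsAux_ofHeights (N : ℕ) {l : List ℕ} {k : ℕ} (h : (k :: l).Pairwise (· ≤ ·)) :
    heightsAux (ofHeights N l k) k = l := by
  induction l generalizing k with
  | nil => simpa [ofHeights, heightsAux] using heightsAux_replicate_true_append (N - k) [] k
  | cons a l ih =>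
    have hka : k ≤ a := List.rel_of_pairwise_cons h (by simp)
    rw [ofHeights, heightsAux_replicate_true_append, Nat.add_sub_cancel' hka, heightsAux,
      ih h.of_cons]

lemma countN_ofHeights {N : ℕ} {l : List ℕ} {k : ℕ} (h : (k :: l).Pairwise (· ≤ ·))
    (hl : ∀ x ∈ k :: l, x ≤ N) : countN (ofHeights N l k) = N - k := by
  induction l generalizing k with
  | nil => simp [ofHeights, countN]
  | cons a l ih =>
    have hk : k ≤ N := hl k (by simp)
    have ha : a ≤ N := hl a (by simp)
    have hka : k ≤ a := List.rel_of_pairwise_cons h (by simp)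
    have := ih h.of_cons fun x hx => hl x (List.mem_cons_of_mem _ hx)
    simp only [countN, ofHeights, List.count_append, List.count_replicate_self,
      List.count_cons_of_ne (Bool.false_ne_true)] at this ⊢
    omega

lemma ofHeights_eq_true_cons {N : ℕ} {l : List ℕ} {k : ℕ} (hN : k < N)
    (hl : ∀ x ∈ l, k < x) :
    ofHeights N l k = true :: ofHeights N l (k + 1) := by
  cases l with
  | nil =>
    rw [ofHeights, ofHeights, ← List.replicate_succ]
    congr 1
    omega
  | cons a l =>
    rw [ofHeights, ofHeights, ← List.cons_append, ← List.replicate_succ]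
    congr 2
    have := hl a (by simp)
    omega

lemma ofHeights_heightsAux (p : List Bool) (k : ℕ) :
    ofHeights (k + countN p) (heightsAux p k) k = p := by
  induction p generalizing k with
  | nil => simp [ofHeights, heightsAux, countN]
  | cons a p ih =>
    cases a with
    | false => simp [heightsAux, ofHeights, ih]
    | true =>
      rw [heightsAux, countN_cons_true, ← Nat.add_assoc, Nat.add_right_comm,
        ofHeights_eq_true_cons (by omega) fun x hx => le_of_mem_heightsAux hx, ih]

lemma eq_of_heights_eq_of_countN_eq {p q : List Bool} (h : heights p = heights q)
    (hN : countN p = countN q) : p = q := by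
  rw [← ofHeights_heightsAux p 0, ← ofHeights_heightsAux q 0]
  exact congrArg₂ (fun N l => ofHeights N l 0) (by rw [hN]) h

lemma exists_heights_eq {l : List ℕ} {N : ℕ} (hl : l.Pairwise (· ≤ ·))
    (hN : ∀ x ∈ l, x ≤ N) :
    ∃ p, heights p = l ∧ countN p = N := by
  have h0 : (0 :: l).Pairwise (· ≤ ·) := List.pairwise_cons.2 ⟨fun _ _ => Nat.zero_le _, hl⟩
  exact ⟨ofHeights N l 0, heightsAux_ofHeights N h0,
    by simpa using countN_ofHeights h0 (by simpa using hN)⟩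

lemma countN_removeFirstN {p : List Bool} (h : true ∈ p) :
    countN (removeFirstN p) + 1 = countN p := by
  induction p with
  | nil => simp at h
  | cons a p ih =>
    cases a with
    | false => simpa [removeFirstN] using ih (by simpa using h)
    | true => simp [removeFirstN]

lemma heightsAux_removeFirstN {p : List Bool} (h : true ∈ p) (k : ℕ) :
    heightsAux (removeFirstN p) k = (heightsAux p k).map fun x => if k < x then x - 1 else x := by
  induction p generalizing k with
  | nil => simp at h
  | cons a p ih =>
    cases a with
    | false => simp [removeFirstN, heightsAux, ih (by simpa using h)]
    | true =>
      rw [removeFirstN, heightsAux, heightsAux_succ, List.map_map]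
      refine ((List.map_congr_left fun x hx => ?_).trans (List.map_id _)).symm
      have := le_of_mem_heightsAux hx
      simp only [Function.comp_apply, id]
      split_ifs <;> omega

lemma countN_removeNAfterE {p : List Bool} {i k : ℕ}
    (h : (heightsAux p k).getD i 0 < k + countN p) (hi : i < countE p) :
    countN (removeNAfterE p i) + 1 = countN p := by
  induction p generalizing i k with
  | nil => exact absurd hi (Nat.not_lt_zero i)
  | cons a p ih =>
    cases a with
    | false =>
      cases i with
      | zero =>
        have : true ∈ p := List.count_pos_iff.1 (by simpa [heightsAux] using h : 0 < countN p)
        simpa [removeNAfterE] using countN_removeFirstN this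
      | succ i =>
        simpa [removeNAfterE] using ih (k := k) (by simpa [heightsAux] using h) (by simpa using hi)
    | true =>
      have h' : (heightsAux p (k + 1)).getD i 0 < k + 1 + countN p := by
        simp only [heightsAux, countN_cons_true] at h
        omega
      simpa [removeNAfterE] using ih h' (by simpa using hi)

lemma heightsAux_removeNAfterE {p : List Bool} {i k : ℕ}
    (h : (heightsAux p k).getD i 0 < k + countN p) (hi : i < countE p) :
    heightsAux (removeNAfterE p i) k =
      (heightsAux p k).map fun x => if (heightsAux p k).getD i 0 < x then x - 1 else x := by
  induction p generalizing i k with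
  | nil => exact absurd hi (Nat.not_lt_zero i)
  | cons a p ih =>
    cases a with
    | false =>
      cases i with
      | zero =>
        have : true ∈ p := List.count_pos_iff.1 (by simpa [heightsAux] using h : 0 < countN p)
        simp [removeNAfterE, heightsAux, heightsAux_removeFirstN this]
      | succ i =>
        have hi' : i < countE p := by simpa using hi
        have hk : k ≤ (heightsAux p k).getD i 0 :=
          le_of_mem_heightsAux (by
            rw [List.getD_eq_getElem _ _ ((length_heightsAux p k).symm ▸ hi')]
            exact List.getElem_mem _)
        simp only [removeNAfterE, heightsAux, List.getD_cons_succ, List.map_cons,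
          ih (by simpa [heightsAux] using h) hi', if_neg (not_lt.2 hk)]
    | true =>
      have h' : (heightsAux p (k + 1)).getD i 0 < k + 1 + countN p := by
        simp only [heightsAux, countN_cons_true] at h
        omega
      simpa [removeNAfterE, heightsAux] using ih h' (by simpa using hi)

def lowerAfter (i : ℕ) (l : List ℕ) : List ℕ :=
  l.mapIdx fun j x => if j ≤ i then x else x - 1

def raiseAfter (i : ℕ) (l : List ℕ) : List ℕ :=
  l.mapIdx fun j x => if j ≤ i then x else x + 1

lemma getD_lowerAfter (i j : ℕ) (l : List ℕ) :
    (lowerAfter i l).getD j 0 = if j ≤ i then l.getD j 0 else l.getD j 0 - 1 := by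
  simp only [lowerAfter, List.getD_eq_getElem?_getD, List.getElem?_mapIdx]
  cases l[j]? <;> simp

lemma getD_raiseAfter (i : ℕ) {j : ℕ} {l : List ℕ} (hj : j < l.length) :
    (raiseAfter i l).getD j 0 = if j ≤ i then l.getD j 0 else l.getD j 0 + 1 := by
  simp [raiseAfter, List.getD_eq_getElem?_getD, hj]

lemma lowerAfter_raiseAfter (i : ℕ) (l : List ℕ) : lowerAfter i (raiseAfter i l) = l := by
  refine List.ext_getElem (by simp [lowerAfter, raiseAfter]) fun j _ _ => ?_
  simp only [lowerAfter, raiseAfter, List.getElem_mapIdx]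
  split_ifs <;> simp

lemma raiseAfter_lowerAfter {i : ℕ} {l : List ℕ}
    (h : ∀ j, i < j → j < l.length → 0 < l.getD j 0) :
    raiseAfter i (lowerAfter i l) = l := by
  refine List.ext_getElem (by simp [lowerAfter, raiseAfter]) fun j _ hj => ?_
  simp only [lowerAfter, raiseAfter, List.getElem_mapIdx]
  split_ifs with hji
  · rfl
  · have := h j (by omega) hj
    rw [List.getD_eq_getElem _ _ hj] at this
    omega

lemma pairwise_raiseAfter (i : ℕ) {l : List ℕ} (hl : l.Pairwise (· ≤ ·)) :
    (raiseAfter i l).Pairwise (· ≤ ·) := by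
  rw [List.pairwise_iff_getElem] at hl ⊢
  intro j k hj hk hjk
  simp only [raiseAfter, List.length_mapIdx, List.getElem_mapIdx] at hj hk ⊢
  have := hl j k hj hk hjk
  split_ifs <;> omega

lemma PathCorner.lt_countE {p : List Bool} {i : ℕ} (hc : PathCorner p i) : i < countE p := by
  rcases hc with ⟨h, _⟩ | ⟨h, _⟩ <;> rw [length_heights] at h <;> omega

lemma PathCorner.getD_lt_getD_succ {p : List Bool} {i : ℕ} (hc : PathCorner p i)
    (hi : i + 1 < countE p) : (heights p).getD i 0 < (heights p).getD (i + 1) 0 := by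
  rcases hc with ⟨h, _⟩ | ⟨_, h⟩
  · rw [length_heights] at h
    omega
  · exact h

lemma heights_removeNAfterE_of_lt {p : List Bool} {i : ℕ} (hi : i + 1 < countE p)
    (h : (heights p).getD i 0 < (heights p).getD (i + 1) 0) :
    heights (removeNAfterE p i) = lowerAfter i (heights p) := by
  have hN := (heights_getD_le_countN p (i + 1)).trans_lt' h
  have hmap : heights (removeNAfterE p i) =
      (heights p).map fun x => if (heights p).getD i 0 < x then x - 1 else x :=
    heightsAux_removeNAfterE (by simpa [heights] using hN) (by omega)
  rw [hmap]
  refine List.ext_getElem (by simp [lowerAfter]) fun j hj _ => ?_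
  rw [List.length_map] at hj
  have hj' : j < countE p := by rwa [← length_heights]
  simp only [List.getElem_map, lowerAfter, List.getElem_mapIdx]
  rw [← List.getD_eq_getElem _ 0 hj]
  by_cases hji : j ≤ i
  · have := heights_getD_mono p hji (by omega)
    rw [if_neg (by omega), if_pos hji]
  · have := heights_getD_mono p (show i + 1 ≤ j by omega) hj'
    rw [if_pos (by omega), if_neg hji]

lemma countN_removeNAfterE_of_lt {p : List Bool} {i : ℕ} (hi : i + 1 < countE p)
    (h : (heights p).getD i 0 < (heights p).getD (i + 1) 0) :
    countN (removeNAfterE p i) + 1 = countN p :=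
  countN_removeNAfterE (k := 0) (by simpa [heights] using
    (heights_getD_le_countN p (i + 1)).trans_lt' h) (by omega)

section

variable {P p q : List Bool} {i : ℕ}

/-- For `q` weakly below `P`, the Northeast-most East step that `q` shares with `P`: every later
East step of `q` lies strictly below the corresponding one of `P`. -/
def IsLastSharedEast (q P : List Bool) (i : ℕ) : Prop :=
  i < countE P ∧ (heights q).getD i 0 = (heights P).getD i 0 ∧
    ∀ j, i < j → j < countE P → (heights q).getD j 0 < (heights P).getD j 0

lemma IsLastSharedEast.unique {i' : ℕ} (h : IsLastSharedEast q P i)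
    (h' : IsLastSharedEast q P i') : i = i' := by
  by_contra hne
  rcases Nat.lt_or_gt_of_ne hne with hlt | hlt
  · exact (h.2.2 i' hlt h'.1).ne h'.2.1
  · exact (h'.2.2 i hlt h.1).ne h.2.1

lemma exists_isLastSharedEast (hq : WeaklyBelow q P) (hE : 0 < countE P)
    (h0 : (heights P).getD 0 0 = 0) : ∃ i, IsLastSharedEast q P i := by
  classical
  obtain ⟨hqE, -, hle⟩ := weaklyBelow_iff.1 hq
  let shared j := (heights q).getD j 0 = (heights P).getD j 0
  have h0' : shared 0 := by
    have := hle 0 (by omega)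
    omega
  refine ⟨Nat.findGreatest shared (countE P - 1), ?_, Nat.findGreatest_spec (Nat.zero_le _) h0',
    fun j hj hjP => ?_⟩
  · have := Nat.findGreatest_le (P := shared) (countE P - 1)
    omega
  · have := Nat.findGreatest_is_greatest hj (by omega)
    have := hle j (by omega)
    omega

lemma heights_shiftAtCorner (hE : countE p = countE P) (hc : PathCorner p i)
    (hi : i + 1 < countE P) : heights (shiftAtCorner P p i) = lowerAfter i (heights p) := by
  rw [shiftAtCorner, if_neg (by omega), heights, heightsAux_append_true,
    ← heights, heights_removeNAfterE_of_lt (hE ▸ hi) (hc.getD_lt_getD_succ (hE ▸ hi))]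

lemma countN_shiftAtCorner (hE : countE p = countE P) (hc : PathCorner p i)
    (hi : i + 1 < countE P) : countN (shiftAtCorner P p i) = countN p := by
  rw [shiftAtCorner, if_neg (by omega), countN_append_true,
    countN_removeNAfterE_of_lt (hE ▸ hi) (hc.getD_lt_getD_succ (hE ▸ hi))]

lemma shiftAtCorner_spec (hp : WeaklyBelow p P) (hc : CommonCorner P p i) :
    WeaklyBelow (shiftAtCorner P p i) P ∧ IsLastSharedEast (shiftAtCorner P p i) P i := by
  obtain ⟨hcp, hcP, hshared⟩ := hc
  obtain ⟨hE, hN, hle⟩ := weaklyBelow_iff.1 hp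
  have hiP := hcP.lt_countE
  by_cases hlast : i = countE P - 1
  · rw [shiftAtCorner, if_pos hlast]
    exact ⟨hp, hiP, hshared, fun j hj hjP => by omega⟩
  have hi : i + 1 < countE P := by omega
  have hh := heights_shiftAtCorner hE hcp hi
  have hqE : countE (shiftAtCorner P p i) = countE P := by
    rw [← length_heights, hh, lowerAfter, List.length_mapIdx, length_heights, hE]
  refine ⟨weaklyBelow_iff.2 ⟨hqE, (countN_shiftAtCorner hE hcp hi).trans hN, fun j hj => ?_⟩,
    hiP, ?_, fun j hj hjP => ?_⟩
  · have := hle j (by omega)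
    rw [hh, getD_lowerAfter]
    split_ifs <;> omega
  · rw [hh, getD_lowerAfter, if_pos le_rfl, hshared]
  · have := heights_getD_mono p (show i + 1 ≤ j by omega) (by omega)
    have := hcp.getD_lt_getD_succ (hE ▸ hi)
    have := hle j (by omega)
    rw [hh, getD_lowerAfter, if_neg (by omega)]
    omega

lemma heights_eq_raiseAfter_shiftAtCorner (hE : countE p = countE P) (hc : PathCorner p i)
    (hi : i + 1 < countE P) : heights p = raiseAfter i (heights (shiftAtCorner P p i)) := by
  rw [heights_shiftAtCorner hE hc hi, raiseAfter_lowerAfter]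
  intro j hj hjl
  have := heights_getD_mono p (show i + 1 ≤ j by omega) (by rwa [← length_heights])
  have := hc.getD_lt_getD_succ (hE ▸ hi)
  omega

lemma eq_of_shiftAtCorner_eq {p' : List Bool} {i' : ℕ} (hp : WeaklyBelow p P)
    (hc : CommonCorner P p i) (hp' : WeaklyBelow p' P) (hc' : CommonCorner P p' i')
    (h : shiftAtCorner P p i = shiftAtCorner P p' i') : p = p' ∧ i = i' := by
  obtain rfl : i = i' := (shiftAtCorner_spec hp hc).2.unique (h ▸ (shiftAtCorner_spec hp' hc').2)
  refine ⟨?_, rfl⟩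
  by_cases hlast : i = countE P - 1
  · simpa [shiftAtCorner, hlast] using h
  have hi : i + 1 < countE P := by
    have := hc.2.1.lt_countE
    omega
  refine eq_of_heights_eq_of_countN_eq ?_ (hp.2.1.trans hp'.2.1.symm)
  rw [heights_eq_raiseAfter_shiftAtCorner hp.1 hc.1 hi, h,
    ← heights_eq_raiseAfter_shiftAtCorner hp'.1 hc'.1 hi]

lemma exists_shiftAtCorner_eq_of_lt (hq : WeaklyBelow q P) (hl : IsLastSharedEast q P i)
    (hi : i + 1 < countE P) :
    ∃ p, WeaklyBelow p P ∧ CommonCorner P p i ∧ shiftAtCorner P p i = q := by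
  obtain ⟨hqE, hqN, hle⟩ := weaklyBelow_iff.1 hq
  obtain ⟨-, hshared, hbelow⟩ := hl
  have hlen : (heights q).length = countE P := by rw [length_heights, hqE]
  have hraise : ∀ j < countE P, (raiseAfter i (heights q)).getD j 0 =
      if j ≤ i then (heights q).getD j 0 else (heights q).getD j 0 + 1 :=
    fun j hj => getD_raiseAfter i (hlen ▸ hj)
  have hbound : ∀ x ∈ raiseAfter i (heights q), x ≤ countN P := by
    intro x hx
    obtain ⟨j, hj, rfl⟩ := List.mem_iff_getElem.1 hx
    rw [raiseAfter, List.length_mapIdx, hlen] at hj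
    have := heights_getD_le_countN q j
    have := heights_getD_le_countN P j
    rw [← List.getD_eq_getElem _ 0, hraise j hj]
    split_ifs with hji
    · omega
    · have := hbelow j (by omega) hj
      omega
  obtain ⟨p, hph, hpN⟩ := exists_heights_eq (pairwise_raiseAfter i (pairwise_heights q)) hbound
  have hpE : countE p = countE P := by
    rw [← length_heights, hph, raiseAfter, List.length_mapIdx, hlen]
  have hmono := heights_getD_mono q (show i ≤ i + 1 by omega) (hqE ▸ hi)
  have hcp : PathCorner p i := Or.inr ⟨by rwa [length_heights, hpE], by
    rw [hph, hraise i (by omega), hraise (i + 1) hi, if_pos le_rfl, if_neg (by omega)]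
    omega⟩
  refine ⟨p, weaklyBelow_iff.2 ⟨hpE, hpN, fun j hj => ?_⟩, ⟨hcp, ?_, ?_⟩, ?_⟩
  · have := hle j (by omega)
    rw [hph, hraise j (by omega)]
    split_ifs with hji
    · exact this
    · exact hbelow j (by omega) (by omega)
  · have := hbelow (i + 1) (by omega) hi
    exact Or.inr ⟨by rwa [length_heights], by omega⟩
  · rw [hph, hraise i (by omega), if_pos le_rfl, hshared]
  · refine eq_of_heights_eq_of_countN_eq ?_ ?_
    · rw [heights_shiftAtCorner hpE hcp hi, hph, lowerAfter_raiseAfter]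
    · rw [countN_shiftAtCorner hpE hcp hi, hpN, hqN]

lemma exists_shiftAtCorner_eq (hP : PathCorner P (countE P - 1)) (h0 : (heights P).getD 0 0 = 0)
    (hq : WeaklyBelow q P) :
    ∃ p i, WeaklyBelow p P ∧ CommonCorner P p i ∧ shiftAtCorner P p i = q := by
  have hE := hP.lt_countE
  obtain ⟨i, hl⟩ := exists_isLastSharedEast hq (by omega) h0
  by_cases hlast : i = countE P - 1
  · subst hlast
    refine ⟨q, _, hq, ⟨?_, hP, hl.2.1⟩, if_pos rfl⟩
    rw [pathCorner_iff_of_succ_eq (by rw [hq.1]; omega), hl.2.1, hq.2.1]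
    exact (pathCorner_iff_of_succ_eq (by omega)).1 hP
  · obtain ⟨p, hp⟩ := exists_shiftAtCorner_eq_of_lt hq hl (by have := hl.1; omega)
    exact ⟨p, i, hp⟩

end

/-- The assignment sending a pair `(P', c)`, with `P'` weakly below `P` and `c`
a common corner of `P'` and `P`, to the path obtained by shifting the subpath
of `P'` Northeast of `c` one step South (or `P'` itself when `c` is the
Northeast-most corner of `P`), is a bijection onto the set of all lattice
paths weakly below `P`. -/
theorem shift_bijection (P : List Bool)
    (hstart : P.take 2 = [false, true]) (hend : P.reverse.take 2 = [true, false]) :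
    Set.BijOn (fun x : List Bool × ℕ => shiftAtCorner P x.1 x.2)
      {x : List Bool × ℕ | WeaklyBelow x.1 P ∧ CommonCorner P x.1 x.2}
      {p : List Bool | WeaklyBelow p P} := by
  have h0 : (heights P).getD 0 0 = 0 := by
    rw [← List.take_append_drop 2 P, hstart]
    rfl
  have hlast : PathCorner P (countE P - 1) := by
    have hP : P = (P.reverse.drop 2).reverse ++ [false, true] := by
      rw [← List.reverse_reverse P, ← List.take_append_drop 2 P.reverse, hend]
      simp
    rw [hP]
    exact pathCorner_append_false_true _
  refine ⟨fun x hx => (shiftAtCorner_spec hx.1 hx.2).1, ?_, fun q hq => ?_⟩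
  · rintro ⟨p, i⟩ ⟨hp, hc⟩ ⟨p', i'⟩ ⟨hp', hc'⟩ h
    obtain ⟨rfl, rfl⟩ := eq_of_shiftAtCorner_eq hp hc hp' hc' h
    rfl
  · obtain ⟨p, i, hp, hc, rfl⟩ := exists_shiftAtCorner_eq hlast h0 hq
    exact ⟨(p, i), ⟨hp, hc⟩, rfl⟩
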